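/- Let N ≥ 1, let u ∈ ℝ^N have at least one nonzero entry, and let F : ℝ^N_{++} → ℝ^N_{++} be continuously differentiable. Assume that F connects all variables, that F scales with exponent u, that the monotonicity behavior of F is consistent with u, that F exhibits self-interaction, and that the fixed point equation x = F(x) has a solution x* ∈ ℝ^N_{++}. Then every solution of x = F(x) is Lyapunov stable, and for every x ∈ ℝ^N_{++} the iterates F^n(x) converge, as n → ∞, to a solution of x = F(x). -/

import Mathlib

/-!
Every `u j` is nonzero: if `u j = 0`, Euler's identity `DF(x) (u x) = u F(x)` makes row `j` of
`DF(x)` a sum of same-signed terms that vanishes, so `F_j` ignores every `x_k` with `u k ≠ 0`,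
contradicting irreducibility. Hence the coordinates `x = exp (u w)` are available, and in them `F`
becomes a map `Φ` that is monotone (from the sign pattern) and commutes with adding constants
(from the scaling): a topical map. Topical maps are nonexpansive in the sup norm, which gives
stability. For convergence, the largest gap `max_j (Φⁿ(w)_j - p_j)` to a fixed point `p`
decreases to some `β`, and stays equal to `β` along the orbit of any limit point `z`. As `DΦ(p)`
is row-stochastic, a coordinate attaining the maximal gap forces every coordinate it depends on to
attain it one step earlier; irreducibility and the self-interaction loop then force `z = p + β`.
-/

open Filter

/-- The positive orthant `ℝ^N_{++}`: vectors all of whose entries are strictly positive. -/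
def PosOrth (N : ℕ) : Set (Fin N → ℝ) := {x | ∀ i, 0 < x i}

/-- The Jacobian matrix of `F` at `x`: entry `(j, k)` is `∂F_j(x)/∂x_k`. -/
noncomputable def Jac {N : ℕ} (F : (Fin N → ℝ) → (Fin N → ℝ)) (x : Fin N → ℝ) :
    Matrix (Fin N) (Fin N) ℝ :=
  Matrix.of fun j k => fderiv ℝ F x (Pi.single k 1) j

/-- A matrix is irreducible if the directed graph on `Fin N` with an edge from `k` to `j`
whenever `M j k ≠ 0` is strongly connected. -/
def MatIrred {N : ℕ} (M : Matrix (Fin N) (Fin N) ℝ) : Prop :=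
  ∀ a b : Fin N, Relation.TransGen (fun k j => M j k ≠ 0) a b

/-- `pscale c u x = c^u x`, i.e. the vector with entries `c ^ (u i) * x i`. -/
noncomputable def pscale {N : ℕ} (c : ℝ) (u x : Fin N → ℝ) : Fin N → ℝ :=
  fun i => c ^ u i * x i

/-- The monotonicity behavior of `F` is consistent with `u`: there is a partition of the
index set into `ζ_+` (where `ζ = true`) and `ζ_-` (where `ζ = false`) such that `u` is
nonnegative on `ζ_+`, nonpositive on `ζ_-`, and on the positive orthant all partial
derivatives `∂F_j/∂x_k` are nonnegative when `j, k` lie in the same set of the partition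
and nonpositive otherwise. -/
def MonoConsistent {N : ℕ} (F : (Fin N → ℝ) → (Fin N → ℝ)) (u : Fin N → ℝ) : Prop :=
  ∃ ζ : Fin N → Bool,
    (∀ j, ζ j = true → 0 ≤ u j) ∧ (∀ j, ζ j = false → u j ≤ 0) ∧
    ∀ x ∈ PosOrth N, ∀ j k : Fin N,
      (ζ j = ζ k → 0 ≤ Jac F x j k) ∧ (ζ j ≠ ζ k → Jac F x j k ≤ 0)

open Topology

section Topical

variable {ι : Type*}

structure IsTopical (Ψ : (ι → ℝ) → ι → ℝ) : Prop where
  monotone : Monotone Ψ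
  map_add_const : ∀ w (t : ℝ), Ψ (w + fun _ => t) = Ψ w + fun _ => t

lemma clm_apply_eq_sum_single [Fintype ι] [DecidableEq ι] (L : (ι → ℝ) →L[ℝ] ι → ℝ)
    (v : ι → ℝ) (j : ι) : L v j = ∑ k, L (Pi.single k 1) j * v k := by
  simpa [Matrix.mulVec, dotProduct] using
    (congrFun (LinearMap.toMatrix'_mulVec (L : (ι → ℝ) →ₗ[ℝ] ι → ℝ) v) j).symm

lemma hasDerivAt_apply_add_smul [Fintype ι] {Ψ : (ι → ℝ) → ι → ℝ} {L : (ι → ℝ) →L[ℝ] ι → ℝ}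
    {p v : ι → ℝ} {t : ℝ} (hL : HasFDerivAt Ψ L (p + t • v)) (j : ι) :
    HasDerivAt (fun s : ℝ => Ψ (p + s • v) j) (L v j) t := by
  have hline : HasDerivAt (fun s : ℝ => p + s • v) v t := by
    simpa using ((hasDerivAt_id t).smul_const v).const_add p
  exact hasDerivAt_pi.1 (hL.comp_hasDerivAt t hline) j

lemma hasDerivAt_apply_add_smul_zero [Fintype ι] {Ψ : (ι → ℝ) → ι → ℝ}
    {L : (ι → ℝ) →L[ℝ] ι → ℝ} {p : ι → ℝ} (hL : HasFDerivAt Ψ L p) (v : ι → ℝ) (j : ι) :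
    HasDerivAt (fun s : ℝ => Ψ (p + s • v) j) (L v j) 0 :=
  hasDerivAt_apply_add_smul (by simpa using hL) j

lemma le_add_const_dist [Fintype ι] (v w : ι → ℝ) : v ≤ w + fun _ => dist v w := fun i => by
  have := (Real.dist_eq _ _ ▸ dist_le_pi_dist v w i : |v i - w i| ≤ dist v w)
  simp only [Pi.add_apply]
  linarith [le_abs_self (v i - w i)]

lemma monotone_of_hasFDerivAt_nonneg [Fintype ι] [DecidableEq ι] {Ψ : (ι → ℝ) → ι → ℝ}
    {D : (ι → ℝ) → (ι → ℝ) →L[ℝ] ι → ℝ} (hD : ∀ w, HasFDerivAt Ψ (D w) w)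
    (hnn : ∀ w j k, 0 ≤ D w (Pi.single k 1) j) : Monotone Ψ := by
  intro a b hab j
  have hderiv : ∀ t : ℝ, HasDerivAt (fun s : ℝ => Ψ (a + s • (b - a)) j)
      (D (a + t • (b - a)) (b - a) j) t :=
    fun t => hasDerivAt_apply_add_smul (hD _) j
  have hmono : Monotone fun s : ℝ => Ψ (a + s • (b - a)) j := by
    refine monotone_of_deriv_nonneg (fun t => (hderiv t).differentiableAt) fun t => ?_
    rw [(hderiv t).deriv, clm_apply_eq_sum_single]
    exact Finset.sum_nonneg fun k _ => mul_nonneg (hnn _ j k) (sub_nonneg.2 (hab k))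
  simpa using hmono zero_le_one

namespace IsTopical

variable {Ψ : (ι → ℝ) → ι → ℝ}

lemma map_add_const_of_fixed (hΨ : IsTopical Ψ) {p : ι → ℝ} (hp : Ψ p = p) (t : ℝ) :
    Ψ (p + fun _ => t) = p + fun _ => t := by
  rw [hΨ.map_add_const, hp]

lemma lipschitzWith_one [Fintype ι] (hΨ : IsTopical Ψ) : LipschitzWith 1 Ψ := by
  have hle : ∀ v w, Ψ v ≤ Ψ w + fun _ => dist v w := fun v w =>
    hΨ.map_add_const w _ ▸ hΨ.monotone (le_add_const_dist v w)
  refine LipschitzWith.of_dist_le_mul fun v w => ?_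
  rw [NNReal.coe_one, one_mul, dist_pi_le_iff dist_nonneg]
  intro i
  have hvw := hle v w i
  have hwv := hle w v i
  simp only [Pi.add_apply] at hvw hwv
  rw [Real.dist_eq, abs_sub_le_iff, dist_comm w v] at *
  constructor <;> linarith

lemma continuous [Fintype ι] (hΨ : IsTopical Ψ) : Continuous Ψ :=
  hΨ.lipschitzWith_one.continuous

lemma dist_iterate_le [Fintype ι] (hΨ : IsTopical Ψ) (v w : ι → ℝ) (n : ℕ) :
    dist (Ψ^[n] v) (Ψ^[n] w) ≤ dist v w := by
  simpa using (hΨ.lipschitzWith_one.iterate n).dist_le_mul v w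

/-- Along the segment from `p` to `p + v`, the coordinate `Ψ_j` is squeezed between the two
bounds `Ψ_j(p + t v) ≤ Ψ_j(p) + t β` (from `t v ≤ t β`) and
`Ψ_j(p + v) ≤ Ψ_j(p + t v) + (1 - t) β` (from `v ≤ t v + (1 - t) β`). -/
lemma apply_add_smul_eq (hΨ : IsTopical Ψ) {p v : ι → ℝ} {β : ℝ} (hv : ∀ k, v k ≤ β) {j : ι}
    (hj : Ψ (p + v) j = Ψ p j + β) {t : ℝ} (ht : t ∈ Set.Icc (0 : ℝ) 1) :
    Ψ (p + t • v) j = Ψ p j + t * β := by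
  have hupper : Ψ (p + t • v) j ≤ Ψ p j + t * β := by
    have h := hΨ.monotone (show p + t • v ≤ p + fun _ => t * β from fun k => by
      simpa using mul_le_mul_of_nonneg_left (hv k) ht.1) j
    simpa [hΨ.map_add_const] using h
  have hlower : Ψ (p + v) j ≤ Ψ (p + t • v) j + (1 - t) * β := by
    have h := hΨ.monotone (show p + v ≤ p + t • v + fun _ => (1 - t) * β from fun k => by
      simp only [Pi.add_apply, Pi.smul_apply, smul_eq_mul]
      nlinarith [hv k, ht.2]) j
    simpa [hΨ.map_add_const] using h
  linarith

section Derivative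

variable [Fintype ι] {L : (ι → ℝ) →L[ℝ] ι → ℝ} {p : ι → ℝ}

lemma fderiv_single_nonneg [DecidableEq ι] (hΨ : IsTopical Ψ) (hL : HasFDerivAt Ψ L p) (j k : ι) :
    0 ≤ L (Pi.single k 1) j := by
  have hmono : Monotone fun s : ℝ => Ψ (p + s • Pi.single k 1) j := fun s s' hss' =>
    hΨ.monotone (add_le_add le_rfl (smul_le_smul_of_nonneg_right hss'
      (Pi.single_nonneg.2 zero_le_one))) j
  have hderiv := hasDerivAt_apply_add_smul_zero hL (Pi.single k 1) j
  exact hderiv.deriv ▸ hmono.deriv_nonneg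

lemma sum_fderiv_single [DecidableEq ι] (hΨ : IsTopical Ψ) (hL : HasFDerivAt Ψ L p) (j : ι) :
    ∑ k, L (Pi.single k 1) j = 1 := by
  have hderiv := hasDerivAt_apply_add_smul_zero hL (fun _ => 1) j
  have hshift : (fun s : ℝ => Ψ (p + s • fun _ => 1) j) = fun s => Ψ p j + s := by
    ext s
    rw [show (s • fun _ : ι => (1 : ℝ)) = fun _ => s by ext; simp, hΨ.map_add_const]
    rfl
  rw [hshift] at hderiv
  have h := ((hasDerivAt_id 0).const_add (Ψ p j)).unique hderiv
  rw [clm_apply_eq_sum_single] at h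
  simpa using h.symm

lemma fderiv_apply_eq (hΨ : IsTopical Ψ) (hL : HasFDerivAt Ψ L p) {v : ι → ℝ} {β : ℝ}
    (hv : ∀ k, v k ≤ β) {j : ι} (hj : Ψ (p + v) j = Ψ p j + β) : L v j = β := by
  have hderiv := (hasDerivAt_apply_add_smul_zero hL v j).hasDerivWithinAt (s := Set.Icc 0 1)
  have haffine : HasDerivWithinAt (fun s : ℝ => Ψ (p + s • v) j) β (Set.Icc 0 1) 0 := by
    refine (((hasDerivAt_id (0 : ℝ)).mul_const β).const_add (Ψ p j)).hasDerivWithinAt.congr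
      (fun t ht => hΨ.apply_add_smul_eq hv hj ht) (by simp)
    |>.congr_deriv (by simp)
  exact (uniqueDiffOn_Icc zero_lt_one 0 ⟨le_rfl, zero_le_one⟩).eq_deriv _ hderiv haffine

/-- `DΨ(p)` is row-stochastic and `DΨ(p) v` has `j`-th entry `β ≥ v`, so `v = β` on the
support of row `j`. -/
lemma eq_of_apply_add_eq_of_fderiv_ne_zero [DecidableEq ι] (hΨ : IsTopical Ψ)
    (hL : HasFDerivAt Ψ L p) {v : ι → ℝ} {β : ℝ} (hv : ∀ k, v k ≤ β) {j : ι}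
    (hj : Ψ (p + v) j = Ψ p j + β) {k : ι}
    (hk : L (Pi.single k 1) j ≠ 0) : v k = β := by
  have hsum : ∑ k, L (Pi.single k 1) j * (β - v k) = 0 := by
    simp only [mul_sub, Finset.sum_sub_distrib, ← Finset.sum_mul, hΨ.sum_fderiv_single hL,
      ← clm_apply_eq_sum_single, hΨ.fderiv_apply_eq hL hv hj, one_mul, sub_self]
  have hterm := (Finset.sum_eq_zero_iff_of_nonneg fun k _ =>
    mul_nonneg (hΨ.fderiv_single_nonneg hL j k) (sub_nonneg.2 (hv k))).1 hsum k
    (Finset.mem_univ k)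
  linarith [(mul_eq_zero.1 hterm).resolve_left hk]

end Derivative

end IsTopical

end Topical

section Propagation

variable {ι : Type*} {r : ι → ι → Prop} {P : ℕ → ι → Prop}

lemma Relation.TransGen.forall_of_step (hstep : ∀ m j k, P (m + 1) j → r j k → P m k)
    {a b : ι} (hab : Relation.TransGen (fun k j => r j k) a b) (hb : ∀ m, P m b) :
    ∀ m, P m a := by
  induction hab with
  | single h => exact fun m => hstep m _ _ (hb (m + 1)) h
  | tail _ h ih => exact ih fun m => hstep m _ _ (hb (m + 1)) h

lemma eventually_not_of_rel (hstep : ∀ m j k, P (m + 1) j → r j k → P m k) {a b : ι}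
    (hba : r b a) (ha : ∀ᶠ m in atTop, ¬P m a) : ∀ᶠ m in atTop, ¬P m b := by
  obtain ⟨M, hM⟩ := eventually_atTop.1 ha
  refine eventually_atTop.2 ⟨M + 1, fun m hm hPm => ?_⟩
  obtain ⟨m, rfl⟩ : ∃ m', m = m' + 1 := ⟨m - 1, by omega⟩
  exact hM m (by omega) (hstep m b a hPm hba)

lemma Relation.TransGen.eventually_not_of_step (hstep : ∀ m j k, P (m + 1) j → r j k → P m k)
    {a b : ι} (hab : Relation.TransGen (fun k j => r j k) a b) (ha : ∀ᶠ m in atTop, ¬P m a) :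
    ∀ᶠ m in atTop, ¬P m b := by
  induction hab with
  | single h => exact eventually_not_of_rel hstep h ha
  | tail _ h ih => exact eventually_not_of_rel hstep h ih

/-- Absence from `P m` spreads forward along the edges of `r`, and the loop at `j₀` makes it
permanent; since every `P m` is nonempty, nothing can be absent. -/
theorem forall_of_step_of_loop [Finite ι]
    (hirr : ∀ a b, Relation.TransGen (fun k j => r j k) a b) {j₀ : ι} (hj₀ : r j₀ j₀)
    (hne : ∀ m, ∃ j, P m j) (hstep : ∀ m j k, P (m + 1) j → r j k → P m k) :
    ∀ m k, P m k := by
  have hloop : ∀ m, P m j₀ := by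
    by_contra! ⟨m₀, hm₀⟩
    have hj₀_absent : ∀ᶠ m in atTop, ¬P m j₀ := eventually_atTop.2 ⟨m₀, fun m hm => by
      induction m, hm using Nat.le_induction with
      | base => exact hm₀
      | succ m _ ih => exact fun hPm => ih (hstep m j₀ j₀ hPm hj₀)⟩
    obtain ⟨m, hm⟩ := (eventually_all.2 fun b =>
      (hirr j₀ b).eventually_not_of_step hstep hj₀_absent).exists
    obtain ⟨j, hj⟩ := hne m
    exact hm j hj
  exact fun m k => (hirr k j₀).forall_of_step hstep hloop m

end Propagation

section MaxGap

variable {ι : Type*} [Fintype ι] [Nonempty ι]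

def maxGap (p v : ι → ℝ) : ℝ := Finset.univ.sup' Finset.univ_nonempty (v - p)

lemma sub_le_maxGap (p v : ι → ℝ) (j : ι) : v j - p j ≤ maxGap p v :=
  Finset.le_sup' (v - p) (Finset.mem_univ j)

lemma exists_sub_eq_maxGap (p v : ι → ℝ) : ∃ j, v j - p j = maxGap p v := by
  obtain ⟨j, -, hj⟩ := Finset.exists_mem_eq_sup' Finset.univ_nonempty (v - p)
  exact ⟨j, hj.symm⟩

lemma le_add_maxGap (p v : ι → ℝ) : v ≤ p + fun _ => maxGap p v := fun j => by
  have := sub_le_maxGap p v j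
  simp only [Pi.add_apply]
  linarith

lemma neg_dist_le_maxGap (p v : ι → ℝ) : -dist v p ≤ maxGap p v := by
  obtain j := Classical.arbitrary ι
  have := (Real.dist_eq _ _ ▸ dist_le_pi_dist v p j : |v j - p j| ≤ dist v p)
  linarith [neg_abs_le (v j - p j), sub_le_maxGap p v j]

lemma continuous_maxGap (p : ι → ℝ) : Continuous (maxGap p) :=
  Continuous.finset_sup'_apply _ fun j _ => (continuous_apply j).sub continuous_const

namespace IsTopical

variable {Ψ : (ι → ℝ) → ι → ℝ} {p : ι → ℝ}

lemma maxGap_map_le (hΨ : IsTopical Ψ) (hp : Ψ p = p) (v : ι → ℝ) :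
    maxGap p (Ψ v) ≤ maxGap p v :=
  Finset.sup'_le _ _ fun j _ => by
    have := hΨ.map_add_const_of_fixed hp _ ▸ hΨ.monotone (le_add_maxGap p v) j
    simp only [Pi.add_apply] at this
    simp only [Pi.sub_apply]
    linarith

lemma tendsto_maxGap_iterate (hΨ : IsTopical Ψ) (hp : Ψ p = p) (w : ι → ℝ) :
    Tendsto (fun n => maxGap p (Ψ^[n] w)) atTop (𝓝 (⨅ n, maxGap p (Ψ^[n] w))) := by
  refine tendsto_atTop_ciInf (antitone_nat_of_succ_le fun n => ?_) ⟨-dist w p, ?_⟩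
  · rw [Function.iterate_succ_apply']
    exact hΨ.maxGap_map_le hp _
  · rintro _ ⟨n, rfl⟩
    have := Function.iterate_fixed hp n ▸ hΨ.dist_iterate_le w p n
    linarith [neg_dist_le_maxGap p (Ψ^[n] w)]

lemma maxGap_iterate_eq_of_mapClusterPt (hΨ : IsTopical Ψ) {w z : ι → ℝ} {β : ℝ}
    (hβ : Tendsto (fun n => maxGap p (Ψ^[n] w)) atTop (𝓝 β))
    (hz : MapClusterPt z atTop fun n => Ψ^[n] w) (m : ℕ) : maxGap p (Ψ^[m] z) = β := by
  obtain ⟨φ, hφ, hlim⟩ := hz.tendsto_subseq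
  have hcont : Tendsto (fun k => maxGap p (Ψ^[m] (Ψ^[φ k] w))) atTop
      (𝓝 (maxGap p (Ψ^[m] z))) :=
    (((continuous_maxGap p).comp (hΨ.continuous.iterate m)).tendsto z).comp hlim
  have hsub : Tendsto (fun k => maxGap p (Ψ^[m] (Ψ^[φ k] w))) atTop (𝓝 β) := by
    simp_rw [← Function.iterate_add_apply]
    exact hβ.comp (tendsto_atTop_mono (fun k => Nat.le_add_left _ m) hφ.tendsto_atTop)
  exact tendsto_nhds_unique hcont hsub

lemma eq_add_const_of_maxGap_iterate_eq [DecidableEq ι] (hΨ : IsTopical Ψ) (hp : Ψ p = p)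
    {L : (ι → ℝ) →L[ℝ] ι → ℝ} (hL : HasFDerivAt Ψ L p)
    (hirr : ∀ a b, Relation.TransGen (fun k j => L (Pi.single k 1) j ≠ 0) a b)
    {j₀ : ι} (hj₀ : L (Pi.single j₀ 1) j₀ ≠ 0) {z : ι → ℝ} {β : ℝ}
    (hz : ∀ m, maxGap p (Ψ^[m] z) = β) : z = p + fun _ => β := by
  have hall := forall_of_step_of_loop (P := fun m j => Ψ^[m] z j - p j = β) hirr hj₀
    (fun m => hz m ▸ exists_sub_eq_maxGap p _) fun m j k hj hjk => by
      have hv : ∀ k, (Ψ^[m] z - p) k ≤ β := fun k => hz m ▸ sub_le_maxGap p _ k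
      refine hΨ.eq_of_apply_add_eq_of_fderiv_ne_zero hL hv ?_ hjk
      rw [add_sub_cancel, hp, ← Function.iterate_succ_apply' Ψ m z]
      linarith [hj]
  ext j
  simpa [sub_eq_iff_eq_add'] using hall 0 j

end IsTopical

end MaxGap

theorem IsTopical.exists_tendsto_iterate {ι : Type*} [Fintype ι] [DecidableEq ι]
    {Ψ : (ι → ℝ) → ι → ℝ} (hΨ : IsTopical Ψ) {p : ι → ℝ} (hp : Ψ p = p)
    {L : (ι → ℝ) →L[ℝ] ι → ℝ} (hL : HasFDerivAt Ψ L p)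
    (hirr : ∀ a b, Relation.TransGen (fun k j => L (Pi.single k 1) j ≠ 0) a b)
    (hloop : ∃ j, L (Pi.single j 1) j ≠ 0) (w : ι → ℝ) :
    ∃ q, Ψ q = q ∧ Tendsto (fun n => Ψ^[n] w) atTop (𝓝 q) := by
  obtain ⟨j₀, hj₀⟩ := hloop
  have : Nonempty ι := ⟨j₀⟩
  obtain ⟨β, hβ⟩ : ∃ β, Tendsto (fun n => maxGap p (Ψ^[n] w)) atTop (𝓝 β) :=
    ⟨_, hΨ.tendsto_maxGap_iterate hp w⟩
  refine ⟨p + fun _ => β, hΨ.map_add_const_of_fixed hp β,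
    (isCompact_closedBall p (dist w p)).tendsto_nhds_of_unique_mapClusterPt
      (Eventually.of_forall fun n => ?_) fun z _ hz => ?_⟩
  · simpa [Function.iterate_fixed hp n] using hΨ.dist_iterate_le w p n
  · exact hΨ.eq_add_const_of_maxGap_iterate_eq hp hL hirr hj₀
      (hΨ.maxGap_iterate_eq_of_mapClusterPt hβ hz)

section Coordwise

variable {ι : Type*}

noncomputable def diagCLM (c : ι → ℝ) : (ι → ℝ) →L[ℝ] ι → ℝ :=
  ContinuousLinearMap.pi fun i => c i • ContinuousLinearMap.proj i

@[simp] lemma diagCLM_apply (c v : ι → ℝ) (i : ι) : diagCLM c v i = c i * v i := rfl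

lemma diagCLM_comp_comp_apply_single [DecidableEq ι] (a b : ι → ℝ) (A : (ι → ℝ) →L[ℝ] ι → ℝ)
    (j k : ι) :
    (diagCLM a ∘L A ∘L diagCLM b) (Pi.single k 1) j = a j * A (Pi.single k 1) j * b k := by
  have hsingle : diagCLM b (Pi.single k 1) = b k • Pi.single k 1 := by
    ext i
    by_cases h : i = k <;> simp [h]
  simp [hsingle, mul_comm, mul_left_comm]

lemma hasFDerivAt_coordwise [Fintype ι] {f : ι → ℝ → ℝ} {f' : ι → ℝ} {w : ι → ℝ}
    (hf : ∀ i, HasDerivAt (f i) (f' i) (w i)) : HasFDerivAt (fun v i => f i (v i)) (diagCLM f') w :=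
  hasFDerivAt_pi'' fun i => by
    refine ((hf i).comp_hasFDerivAt w
      (ContinuousLinearMap.proj (R := ℝ) (φ := fun _ : ι => ℝ) i).hasFDerivAt).congr_fderiv ?_
    ext v
    simp

end Coordwise

section LogCoordinates

variable {N : ℕ} {u : Fin N → ℝ} {F : (Fin N → ℝ) → Fin N → ℝ}

lemma isOpen_posOrth : IsOpen (PosOrth N) := by
  simpa [PosOrth, Set.ofPred_forall] using
    isOpen_iInter_of_finite fun i => isOpen_lt continuous_const (continuous_apply i)

lemma MonoConsistent.mul_mul_jac_nonneg (h : MonoConsistent F u) {x : Fin N → ℝ}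
    (hx : x ∈ PosOrth N) (j k : Fin N) : 0 ≤ u j * u k * Jac F x j k := by
  obtain ⟨ζ, hpos, hneg, hJ⟩ := h
  have hsame := (hJ x hx j k).1
  have hdiff := (hJ x hx j k).2
  cases hj : ζ j <;> cases hk : ζ k
  · exact mul_nonneg (mul_nonneg_of_nonpos_of_nonpos (hneg j hj) (hneg k hk))
      (hsame (by rw [hj, hk]))
  · exact mul_nonneg_of_nonpos_of_nonpos (mul_nonpos_of_nonpos_of_nonneg (hneg j hj) (hpos k hk))
      (hdiff (by simp [hj, hk]))
  · exact mul_nonneg_of_nonpos_of_nonpos (mul_nonpos_of_nonneg_of_nonpos (hpos j hj) (hneg k hk))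
      (hdiff (by simp [hj, hk]))
  · exact mul_nonneg (mul_nonneg (hpos j hj) (hpos k hk)) (hsame (by rw [hj, hk]))

lemma MonoConsistent.jac_mul_nonneg_or_nonpos (h : MonoConsistent F u) {x : Fin N → ℝ}
    (hx : x ∈ PosOrth N) (j : Fin N) :
    (∀ k, 0 ≤ Jac F x j k * u k) ∨ ∀ k, Jac F x j k * u k ≤ 0 := by
  obtain ⟨ζ, hpos, hneg, hJ⟩ := h
  cases hj : ζ j
  · refine .inr fun k => ?_
    cases hk : ζ k
    · exact mul_nonpos_of_nonneg_of_nonpos ((hJ x hx j k).1 (by rw [hj, hk])) (hneg k hk)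
    · exact mul_nonpos_of_nonpos_of_nonneg ((hJ x hx j k).2 (by simp [hj, hk])) (hpos k hk)
  · refine .inl fun k => ?_
    cases hk : ζ k
    · exact mul_nonneg_of_nonpos_of_nonpos ((hJ x hx j k).2 (by simp [hj, hk])) (hneg k hk)
    · exact mul_nonneg ((hJ x hx j k).1 (by rw [hj, hk])) (hpos k hk)

lemma pscale_one (u x : Fin N → ℝ) : pscale 1 u x = x := by
  ext i
  simp [pscale]

lemma hasDerivAt_pscale (u y : Fin N → ℝ) :
    HasDerivAt (fun c : ℝ => pscale c u y) (fun i => u i * y i) 1 :=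
  hasDerivAt_pi.2 fun i => by
    simpa [pscale] using (Real.hasDerivAt_rpow_const (Or.inl one_ne_zero)).mul_const (y i)

lemma fderiv_apply_mul_eq_of_scale (hF : DifferentiableOn ℝ F (PosOrth N))
    (hscale : ∀ x ∈ PosOrth N, ∀ c : ℝ, 0 < c → F (pscale c u x) = pscale c u (F x))
    {x : Fin N → ℝ} (hx : x ∈ PosOrth N) :
    fderiv ℝ F x (fun i => u i * x i) = fun j => u j * F x j := by
  have hFx : HasFDerivAt F (fderiv ℝ F x) (pscale 1 u x) := by
    rw [pscale_one]
    exact (hF.differentiableAt (isOpen_posOrth.mem_nhds hx)).hasFDerivAt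
  refine (hFx.comp_hasDerivAt 1 (hasDerivAt_pscale u x)).unique
    ((hasDerivAt_pscale u (F x)).congr_of_eventuallyEq ?_)
  filter_upwards [eventually_gt_nhds one_pos] with c hc using hscale x hx c hc

lemma MonoConsistent.jac_eq_zero (hmono : MonoConsistent F u)
    (hF : DifferentiableOn ℝ F (PosOrth N))
    (hscale : ∀ x ∈ PosOrth N, ∀ c : ℝ, 0 < c → F (pscale c u x) = pscale c u (F x))
    {x : Fin N → ℝ} (hx : x ∈ PosOrth N) {j k : Fin N} (hj : u j = 0) (hk : u k ≠ 0) :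
    Jac F x j k = 0 := by
  have hsum : ∑ k, Jac F x j k * u k * x k = 0 := by
    have := congrFun (fderiv_apply_mul_eq_of_scale hF hscale hx) j
    rw [clm_apply_eq_sum_single, hj, zero_mul] at this
    simpa [Jac, mul_assoc] using this
  have hterm : Jac F x j k * u k * x k = 0 := by
    rcases hmono.jac_mul_nonneg_or_nonpos hx j with h | h
    · exact (Finset.sum_eq_zero_iff_of_nonneg fun k _ => mul_nonneg (h k) (hx k).le).1 hsum k
        (Finset.mem_univ k)
    · exact (Finset.sum_eq_zero_iff_of_nonpos fun k _ =>
        mul_nonpos_of_nonpos_of_nonneg (h k) (hx k).le).1 hsum k (Finset.mem_univ k)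
  simpa [hk, (hx k).ne'] using hterm

lemma MonoConsistent.forall_ne_zero (hmono : MonoConsistent F u)
    (hF : DifferentiableOn ℝ F (PosOrth N))
    (hscale : ∀ x ∈ PosOrth N, ∀ c : ℝ, 0 < c → F (pscale c u x) = pscale c u (F x))
    (hu : u ≠ 0) {x : Fin N → ℝ} (hx : x ∈ PosOrth N)
    (hconn : MatIrred (Matrix.of fun j k => |Jac F x j k|)) : ∀ j, u j ≠ 0 := by
  obtain ⟨a, ha⟩ := Function.ne_iff.1 hu
  intro b
  induction hconn a b with
  | single h => exact fun hb => h (by simp [hmono.jac_eq_zero hF hscale hx hb ha])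
  | tail _ h ih => exact fun hb => h (by simp [hmono.jac_eq_zero hF hscale hx hb ih])

noncomputable def expCoord (u w : Fin N → ℝ) : Fin N → ℝ := fun i => Real.exp (u i * w i)

noncomputable def logCoord (u x : Fin N → ℝ) : Fin N → ℝ := fun i => Real.log (x i) / u i

noncomputable def logConj (u : Fin N → ℝ) (F : (Fin N → ℝ) → Fin N → ℝ) :
    (Fin N → ℝ) → Fin N → ℝ :=
  fun w => logCoord u (F (expCoord u w))

lemma expCoord_mem (u w : Fin N → ℝ) : expCoord u w ∈ PosOrth N := fun _ => Real.exp_pos _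

lemma expCoord_logCoord (hu0 : ∀ j, u j ≠ 0) {x : Fin N → ℝ} (hx : x ∈ PosOrth N) :
    expCoord u (logCoord u x) = x := by
  ext i
  simp [expCoord, logCoord, mul_div_cancel₀ _ (hu0 i), Real.exp_log (hx i)]

lemma continuous_expCoord (u : Fin N → ℝ) : Continuous (expCoord u) := by
  unfold expCoord
  fun_prop

lemma expCoord_add_const (u w : Fin N → ℝ) (t : ℝ) :
    expCoord u (w + fun _ => t) = pscale (Real.exp t) u (expCoord u w) := by
  ext i
  simp only [expCoord, pscale, Pi.add_apply, Real.rpow_def_of_pos (Real.exp_pos t),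
    Real.log_exp, ← Real.exp_add]
  ring_nf

lemma logCoord_pscale (hu0 : ∀ j, u j ≠ 0) {y : Fin N → ℝ} (hy : y ∈ PosOrth N) (t : ℝ) :
    logCoord u (pscale (Real.exp t) u y) = logCoord u y + fun _ => t := by
  ext j
  simp only [logCoord, pscale, Pi.add_apply]
  rw [Real.log_mul (Real.rpow_pos_of_pos (Real.exp_pos t) _).ne' (hy j).ne',
    Real.log_rpow (Real.exp_pos t), Real.log_exp, add_div, mul_div_cancel_left₀ _ (hu0 j),
    add_comm]

lemma logConj_add_const (hu0 : ∀ j, u j ≠ 0) (hmap : ∀ x ∈ PosOrth N, F x ∈ PosOrth N)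
    (hscale : ∀ x ∈ PosOrth N, ∀ c : ℝ, 0 < c → F (pscale c u x) = pscale c u (F x))
    (w : Fin N → ℝ) (t : ℝ) : logConj u F (w + fun _ => t) = logConj u F w + fun _ => t := by
  rw [logConj, expCoord_add_const, hscale _ (expCoord_mem u w) _ (Real.exp_pos t),
    logCoord_pscale hu0 (hmap _ (expCoord_mem u w))]
  rfl

lemma hasFDerivAt_expCoord (u w : Fin N → ℝ) :
    HasFDerivAt (expCoord u) (diagCLM fun i => u i * expCoord u w i) w :=
  hasFDerivAt_coordwise (f := fun i s => Real.exp (u i * s)) fun i =>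
    ((hasDerivAt_id (w i)).const_mul (u i)).exp.congr_deriv (by simp [expCoord, mul_comm])

lemma hasFDerivAt_logCoord (u : Fin N → ℝ) {y : Fin N → ℝ} (hy : y ∈ PosOrth N) :
    HasFDerivAt (logCoord u) (diagCLM fun j => (u j * y j)⁻¹) y :=
  hasFDerivAt_coordwise (f := fun j s => Real.log s / u j) fun j =>
    ((Real.hasDerivAt_log (hy j).ne').div_const (u j)).congr_deriv (by ring)

lemma continuousAt_logCoord (u : Fin N → ℝ) {y : Fin N → ℝ} (hy : y ∈ PosOrth N) :
    ContinuousAt (logCoord u) y :=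
  (hasFDerivAt_logCoord u hy).continuousAt

noncomputable def logConjDeriv (u : Fin N → ℝ) (F : (Fin N → ℝ) → Fin N → ℝ) (w : Fin N → ℝ) :
    (Fin N → ℝ) →L[ℝ] Fin N → ℝ :=
  diagCLM (fun j => (u j * F (expCoord u w) j)⁻¹) ∘L fderiv ℝ F (expCoord u w) ∘L
    diagCLM fun k => u k * expCoord u w k

lemma logConjDeriv_single (u : Fin N → ℝ) (F : (Fin N → ℝ) → Fin N → ℝ) (w : Fin N → ℝ)
    (j k : Fin N) :
    logConjDeriv u F w (Pi.single k 1) j =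
      (u j * F (expCoord u w) j)⁻¹ * Jac F (expCoord u w) j k * (u k * expCoord u w k) :=
  diagCLM_comp_comp_apply_single _ _ _ j k

lemma hasFDerivAt_logConj (hF : DifferentiableOn ℝ F (PosOrth N))
    (hmap : ∀ x ∈ PosOrth N, F x ∈ PosOrth N) (w : Fin N → ℝ) :
    HasFDerivAt (logConj u F) (logConjDeriv u F w) w :=
  (hasFDerivAt_logCoord u (hmap _ (expCoord_mem u w))).comp w
    ((hF.differentiableAt (isOpen_posOrth.mem_nhds (expCoord_mem u w))).hasFDerivAt.comp w
      (hasFDerivAt_expCoord u w))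

lemma logConjDeriv_single_nonneg (hmap : ∀ x ∈ PosOrth N, F x ∈ PosOrth N)
    (hmono : MonoConsistent F u) (hu0 : ∀ j, u j ≠ 0) (w : Fin N → ℝ) (j k : Fin N) :
    0 ≤ logConjDeriv u F w (Pi.single k 1) j := by
  have hx := expCoord_mem u w
  have hy := hmap _ hx
  rw [logConjDeriv_single]
  set x := expCoord u w
  have hsign : (u j * F x j)⁻¹ * Jac F x j k * (u k * x k) =
      u j * u k * Jac F x j k * (x k / (u j ^ 2 * F x j)) := by
    field_simp [hu0 j, (hy j).ne']
  rw [hsign]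
  exact mul_nonneg (hmono.mul_mul_jac_nonneg hx j k)
    (div_nonneg (hx k).le (mul_nonneg (sq_nonneg _) (hy j).le))

lemma logConjDeriv_logCoord_single_ne_zero (hmap : ∀ x ∈ PosOrth N, F x ∈ PosOrth N)
    (hu0 : ∀ j, u j ≠ 0) {x : Fin N → ℝ} (hx : x ∈ PosOrth N) {j k : Fin N}
    (hjk : Jac F x j k ≠ 0) : logConjDeriv u F (logCoord u x) (Pi.single k 1) j ≠ 0 := by
  rw [logConjDeriv_single, expCoord_logCoord hu0 hx]
  exact mul_ne_zero (mul_ne_zero (inv_ne_zero (mul_ne_zero (hu0 j) (hmap x hx j).ne')) hjk)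
    (mul_ne_zero (hu0 k) (hx k).ne')

lemma logConj_isTopical (hF : DifferentiableOn ℝ F (PosOrth N))
    (hmap : ∀ x ∈ PosOrth N, F x ∈ PosOrth N)
    (hscale : ∀ x ∈ PosOrth N, ∀ c : ℝ, 0 < c → F (pscale c u x) = pscale c u (F x))
    (hmono : MonoConsistent F u) (hu0 : ∀ j, u j ≠ 0) : IsTopical (logConj u F) where
  monotone := monotone_of_hasFDerivAt_nonneg (hasFDerivAt_logConj hF hmap)
    (logConjDeriv_single_nonneg hmap hmono hu0)
  map_add_const := logConj_add_const hu0 hmap hscale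

lemma semiconj_expCoord_logConj (hu0 : ∀ j, u j ≠ 0) (hmap : ∀ x ∈ PosOrth N, F x ∈ PosOrth N) :
    Function.Semiconj (expCoord u) (logConj u F) F := fun w =>
  expCoord_logCoord hu0 (hmap _ (expCoord_mem u w))

lemma iterate_eq_expCoord_logConj (hu0 : ∀ j, u j ≠ 0) (hmap : ∀ x ∈ PosOrth N, F x ∈ PosOrth N)
    {x : Fin N → ℝ} (hx : x ∈ PosOrth N) (n : ℕ) :
    F^[n] x = expCoord u ((logConj u F)^[n] (logCoord u x)) := by
  conv_lhs => rw [← expCoord_logCoord hu0 hx]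
  exact ((semiconj_expCoord_logConj hu0 hmap).iterate_right n _).symm

lemma logConj_logCoord_of_fixed (hu0 : ∀ j, u j ≠ 0) {y : Fin N → ℝ} (hy : y ∈ PosOrth N)
    (hfix : F y = y) : logConj u F (logCoord u y) = logCoord u y := by
  rw [logConj, expCoord_logCoord hu0 hy, hfix]

lemma lyapunovStable_of_isTopical (hu0 : ∀ j, u j ≠ 0)
    (hmap : ∀ x ∈ PosOrth N, F x ∈ PosOrth N) (hΦ : IsTopical (logConj u F))
    {y : Fin N → ℝ} (hy : y ∈ PosOrth N) (hfix : F y = y) :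
    ∀ ε > (0 : ℝ), ∃ δ > (0 : ℝ), ∀ x ∈ PosOrth N, ‖x - y‖ < δ →
      ∀ n : ℕ, ‖F^[n] x - F^[n] y‖ < ε := by
  intro ε hε
  have hexp_cont : ContinuousAt (expCoord u) (logCoord u y) := (continuous_expCoord u).continuousAt
  obtain ⟨η, hη, hexp⟩ := Metric.continuousAt_iff.1 hexp_cont ε hε
  obtain ⟨δ, hδ, hlog⟩ := Metric.continuousAt_iff.1 (continuousAt_logCoord u hy) η hη
  refine ⟨δ, hδ, fun x hx hxy n => ?_⟩
  have hq := Function.iterate_fixed (logConj_logCoord_of_fixed hu0 hy hfix) n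
  have hclose := hexp ((hq ▸ hΦ.dist_iterate_le (logCoord u x) (logCoord u y) n).trans_lt
    (hlog (by rwa [dist_eq_norm])))
  rwa [expCoord_logCoord hu0 hy, ← iterate_eq_expCoord_logConj hu0 hmap hx, dist_eq_norm,
    ← Function.iterate_fixed hfix n] at hclose

end LogCoordinates

theorem stability_and_attractivity_general
    {N : ℕ} (u : Fin N → ℝ) (hu : u ≠ 0)
    (F : (Fin N → ℝ) → (Fin N → ℝ))
    (hmap : ∀ x ∈ PosOrth N, F x ∈ PosOrth N)
    (hC1 : ContDiffOn ℝ 1 F (PosOrth N))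
    (hconn : ∀ x ∈ PosOrth N, MatIrred (Matrix.of fun j k => |Jac F x j k|))
    (hscale : ∀ x ∈ PosOrth N, ∀ c : ℝ, 0 < c → F (pscale c u x) = pscale c u (F x))
    (hmono : MonoConsistent F u)
    (hself : ∀ x ∈ PosOrth N, ∃ j, Jac F x j j ≠ 0)
    (xstar : Fin N → ℝ) (hxstar : xstar ∈ PosOrth N) (hfix : F xstar = xstar) :
    (∀ y ∈ PosOrth N, F y = y →
      ∀ ε > (0 : ℝ), ∃ δ > (0 : ℝ), ∀ x ∈ PosOrth N, ‖x - y‖ < δ →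
        ∀ n : ℕ, ‖F^[n] x - F^[n] y‖ < ε) ∧
    (∀ x ∈ PosOrth N, ∃ y, y ∈ PosOrth N ∧ F y = y ∧
      Tendsto (fun n => F^[n] x) atTop (nhds y)) := by
  have hF : DifferentiableOn ℝ F (PosOrth N) := hC1.differentiableOn one_ne_zero
  have hu0 := hmono.forall_ne_zero hF hscale hu hxstar (hconn xstar hxstar)
  have hΦ := logConj_isTopical hF hmap hscale hmono hu0
  refine ⟨fun y hy hyfix => lyapunovStable_of_isTopical hu0 hmap hΦ hy hyfix, fun x hx => ?_⟩
  have hentry {j k : Fin N} (h : Jac F xstar j k ≠ 0) :=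
    logConjDeriv_logCoord_single_ne_zero hmap hu0 hxstar h
  obtain ⟨q, hq, hlim⟩ := hΦ.exists_tendsto_iterate (logConj_logCoord_of_fixed hu0 hxstar hfix)
    (hasFDerivAt_logConj hF hmap _)
    (fun a b => Relation.TransGen.mono (fun _ _ h => hentry (abs_ne_zero.1 h)) a b
      (hconn xstar hxstar a b))
    ((hself xstar hxstar).imp fun _ => hentry) (logCoord u x)
  refine ⟨expCoord u q, expCoord_mem u q, by rw [← semiconj_expCoord_logConj hu0 hmap q, hq], ?_⟩
  simp_rw [iterate_eq_expCoord_logConj hu0 hmap hx]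
  exact ((continuous_expCoord u).tendsto q).comp hlim

/-- **Main theorem, part (ii) (Lyapunov stability and attractivity).**
If `F : ℝ^N_{++} → ℝ^N_{++}` is continuously differentiable, connects all variables,
scales with exponent `u ≠ 0`, its monotonicity behavior is consistent with `u`, `F`
exhibits self-interaction, and the fixed point equation `x = F(x)` has a solution
`x* ∈ ℝ^N_{++}`, then every solution of `x = F(x)` is Lyapunov stable and for every
`x ∈ ℝ^N_{++}` the iterates `F^n(x)` converge to a solution of `x = F(x)`. -/
theorem stability_and_attractivity
    {N : ℕ} (hN : 1 ≤ N) (u : Fin N → ℝ) (hu : u ≠ 0)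
    (F : (Fin N → ℝ) → (Fin N → ℝ))
    (hmap : ∀ x ∈ PosOrth N, F x ∈ PosOrth N)
    (hC1 : ContDiffOn ℝ 1 F (PosOrth N))
    (hconn : ∀ x ∈ PosOrth N, MatIrred (Matrix.of fun j k => |Jac F x j k|))
    (hscale : ∀ x ∈ PosOrth N, ∀ c : ℝ, 0 < c → F (pscale c u x) = pscale c u (F x))
    (hmono : MonoConsistent F u)
    (hself : ∀ x ∈ PosOrth N, ∃ j, Jac F x j j ≠ 0)
    (xstar : Fin N → ℝ) (hxstar : xstar ∈ PosOrth N) (hfix : F xstar = xstar) :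
    (∀ y ∈ PosOrth N, F y = y →
      ∀ ε > (0 : ℝ), ∃ δ > (0 : ℝ), ∀ x ∈ PosOrth N, ‖x - y‖ < δ →
        ∀ n : ℕ, ‖F^[n] x - F^[n] y‖ < ε) ∧
    (∀ x ∈ PosOrth N, ∃ y, y ∈ PosOrth N ∧ F y = y ∧
      Tendsto (fun n => F^[n] x) atTop (nhds y)) :=
  stability_and_attractivity_general u hu F hmap hC1 hconn hscale hmono hself xstar hxstar hfix
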